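/- Let n ≥ 1 and consider the subset R of (ℝ∖{0})^n consisting of all z = (z_1, …, z_n) such that ∏_{l=i}^{j} z_l ≠ 1 for all 1 ≤ i ≤ j ≤ n. Then R has exactly (n+2)!/2 connected components, each homeomorphic to ℝ^n; in particular the Euler characteristic of R is (n+2)!/2. (R is the fixed-point set T_{A_n}^{\bar{id}} of complex conjugation on the complement T_{A_n}, in the coordinates z_i = χ(β_i), so E(T_{A_n}^{\bar{id}}) = (n+2)!/2.) -/

import Mathlib

/-!
The partial products `pₖ = z₁ ⋯ zₖ` satisfy `∏_{l=i}^{j} z_l = p_j / p_{i-1}` (with `p₀ = 1`), so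
they identify `R` homeomorphically with the set of `w ∈ ℝⁿ` for which `0, 1, w₁, …, wₙ` are
pairwise distinct. This is the complement of a real hyperplane arrangement: the relative order
of `0, 1, w₁, …, wₙ` is locally constant on it, and each of its fibres, a chamber, is open and
convex, hence connected. So the components are the chambers, one for each ordering of the
`n + 2` points in which `0` precedes `1`, that is `(n + 2)! / 2` of them. Squeezing every
coordinate into `(-1, 1)` by an increasing homeomorphism turns a chamber into a bounded open
convex set, which is homeomorphic to `ℝⁿ`.
-/

open Finset Function Topology

section PartialProd

variable {n : ℕ}

theorem Fin.partialProd_eq_prod_filter {M : Type*} [CommMonoid M] (f : Fin n → M)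
    (k : Fin (n + 1)) : partialProd f k = ∏ l with l.castSucc < k, f l := by
  induction k using Fin.induction with
  | zero => simp
  | succ k ih =>
    rw [partialProd_succ, ih, mul_comm, ← prod_insert (by simp)]
    congr 1
    ext l
    simp only [mem_insert, mem_filter, mem_univ, true_and, Fin.ext_iff, castSucc_lt_succ_iff,
      castSucc_lt_castSucc_iff]
    omega

theorem Fin.partialProd_succ_eq_mul_prod_Icc {M : Type*} [CommMonoid M] (f : Fin n → M)
    {i j : Fin n} (hij : i ≤ j) :
    partialProd f j.succ = partialProd f i.castSucc * ∏ l ∈ Icc i j, f l := by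
  rw [partialProd_eq_prod_filter, partialProd_eq_prod_filter, ← Finset.prod_union]
  · congr 1
    ext l
    simp only [mem_union, mem_filter, mem_univ, true_and, mem_Icc, castSucc_lt_succ_iff,
      castSucc_lt_castSucc_iff]
    omega
  · rw [disjoint_left]
    intro l
    simp only [mem_filter, mem_univ, true_and, mem_Icc, castSucc_lt_castSucc_iff, not_and,
      not_le]
    omega

theorem Fin.continuous_partialProd {M : Type*} [CommMonoid M] [TopologicalSpace M]
    [ContinuousMul M] (k : Fin (n + 1)) : Continuous fun f : Fin n → M => partialProd f k := by
  simp_rw [partialProd_eq_prod_filter]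
  fun_prop

theorem Fin.partialProd_ne_zero_iff {M : Type*} [CommMonoidWithZero M] [NoZeroDivisors M]
    [Nontrivial M] {f : Fin n → M} : (∀ k, partialProd f k ≠ 0) ↔ ∀ i, f i ≠ 0 := by
  refine ⟨fun h i => right_ne_zero_of_mul (partialProd_succ f i ▸ h i.succ), fun h k => ?_⟩
  rw [partialProd_eq_prod_filter]
  exact prod_ne_zero_iff.2 fun l _ => h l

theorem Fin.exists_castSucc_eq_succ_eq_of_lt {a b : Fin (n + 1)} (hab : a < b) :
    ∃ i j : Fin n, i ≤ j ∧ a = i.castSucc ∧ b = j.succ := by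
  have := b.isLt
  rw [Fin.lt_def] at hab
  refine ⟨⟨a, by omega⟩, ⟨b - 1, by omega⟩, ?_, ?_, ?_⟩ <;>
    simp only [Fin.le_def, Fin.ext_iff, Fin.val_castSucc, Fin.val_succ] <;> omega

theorem Fin.injective_partialProd_iff {M : Type*} [CommMonoidWithZero M] [IsCancelMulZero M]
    {f : Fin n → M} (hf : ∀ k, partialProd f k ≠ 0) :
    Injective (partialProd f) ↔ ∀ i j, i ≤ j → ∏ l ∈ Icc i j, f l ≠ 1 := by
  refine ⟨fun hinj i j hij hprod => ?_, fun h => .of_lt_imp_ne fun a b hab => ?_⟩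
  · have := partialProd_succ_eq_mul_prod_Icc f hij
    rw [hprod, mul_one] at this
    exact (castSucc_lt_succ_iff.2 hij).ne' (hinj this)
  · obtain ⟨i, j, hij, rfl, rfl⟩ := exists_castSucc_eq_succ_eq_of_lt hab
    rw [partialProd_succ_eq_mul_prod_Icc f hij, ne_comm, Ne, mul_eq_left₀ (hf _)]
    exact h i j hij

end PartialProd

theorem Tuple.eq_sort_iff_strictMono {m : ℕ} {α : Type*} [LinearOrder α] {f : Fin m → α}
    (hf : Injective f) {σ : Equiv.Perm (Fin m)} : σ = sort f ↔ StrictMono (f ∘ σ) := by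
  rw [eq_sort_iff]
  exact ⟨fun h => h.1.strictMono_of_injective (hf.comp σ.injective),
    fun h => ⟨h.monotone, fun i j hij hfij => absurd (σ.injective (hf hfij)) hij.ne⟩⟩

theorem Equiv.Perm.two_mul_card_symm_lt {α : Type*} [Fintype α] [DecidableEq α] [LinearOrder α]
    {a b : α} (hab : a ≠ b) :
    2 * Nat.card {σ : Perm α // σ.symm a < σ.symm b} = (Fintype.card α).factorial := by
  have hswap : {σ : Perm α // σ.symm a < σ.symm b} ≃ {σ : Perm α // ¬σ.symm a < σ.symm b} :=
    (Equiv.subtypeEquiv (q := fun σ : Perm α => σ.symm b < σ.symm a)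
      (Equiv.mulLeft (swap a b)) fun σ => by simp [Perm.mul_def]).trans
    (Equiv.subtypeEquivRight fun σ => by
      rw [not_lt, le_iff_lt_or_eq, or_iff_left (σ.symm.injective.ne hab.symm)])
  rw [two_mul, ← Fintype.card_perm, ← Nat.card_eq_fintype_card]
  nth_rw 2 [Nat.card_congr hswap]
  rw [← Nat.card_sum]
  exact Nat.card_congr (Equiv.sumCompl _)

theorem IsLocallyConstant.connectedComponent_eq_preimage {X α : Type*} [TopologicalSpace X]
    {f : X → α} (hf : IsLocallyConstant f) (hfib : ∀ a, IsPreconnected (f ⁻¹' {a})) (x : X) :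
    connectedComponent x = f ⁻¹' {f x} :=
  ((hf.isClopen_fiber (f x)).connectedComponent_subset rfl).antisymm
    ((hfib (f x)).subset_connectedComponent rfl)

noncomputable def IsLocallyConstant.connectedComponentsEquivRange {X α : Type*}
    [TopologicalSpace X] {f : X → α} (hf : IsLocallyConstant f)
    (hfib : ∀ a, IsPreconnected (f ⁻¹' {a})) : ConnectedComponents X ≃ Set.range f :=
  (Quotient.congrRight fun x y => by
    change connectedComponent x = connectedComponent y ↔ f x = f y
    rw [hf.connectedComponent_eq_preimage hfib, hf.connectedComponent_eq_preimage hfib]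
    exact ⟨fun h => (h ▸ rfl : x ∈ f ⁻¹' {f y}), fun h => h ▸ rfl⟩).trans
    (Setoid.quotientKerEquivRange f)

theorem Convex.nonempty_homeomorph_of_isOpen_of_isBounded {E : Type*} [NormedAddCommGroup E]
    [NormedSpace ℝ E] {s : Set E} (hc : Convex ℝ s) (ho : IsOpen s) (hb : Bornology.IsBounded s)
    (hne : s.Nonempty) : Nonempty (s ≃ₜ E) := by
  obtain ⟨h, hball, -, -⟩ :=
    exists_homeomorph_image_interior_closure_frontier_eq_unitBall hc (by rwa [ho.interior_eq]) hb
  rw [ho.interior_eq] at hball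
  exact ⟨(h.image s).trans ((Homeomorph.setCongr hball).trans Homeomorph.unitBall.symm)⟩

section Chamber

variable {n : ℕ}

def cons₂ (a b : ℝ) (w : Fin n → ℝ) : Fin (n + 2) → ℝ := Fin.cons a (Fin.cons b w)

@[simp] theorem cons₂_zero (a b : ℝ) (w : Fin n → ℝ) : cons₂ a b w 0 = a := rfl

@[simp] theorem cons₂_one (a b : ℝ) (w : Fin n → ℝ) : cons₂ a b w 1 = b := rfl

@[simp] theorem cons₂_succ_succ (a b : ℝ) (w : Fin n → ℝ) (i : Fin n) :
    cons₂ a b w i.succ.succ = w i := rfl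

theorem comp_cons₂ (φ : ℝ → ℝ) (a b : ℝ) (w : Fin n → ℝ) :
    φ ∘ cons₂ a b w = cons₂ (φ a) (φ b) (φ ∘ w) := by
  simp only [cons₂, Fin.comp_cons]

theorem cons₂_self (x : Fin (n + 2) → ℝ) : cons₂ (x 0) (x 1) (fun i => x i.succ.succ) = x := by
  ext k
  refine Fin.cases rfl (Fin.cases rfl fun i => rfl) k

theorem continuous_cons₂ (a b : ℝ) : Continuous (cons₂ a b : (Fin n → ℝ) → _) :=
  continuous_const.finCons (continuous_const.finCons continuous_id)

theorem cons₂_smul_add_smul (a b : ℝ) (v w : Fin n → ℝ) {s t : ℝ} (hst : s + t = 1) :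
    cons₂ a b (s • v + t • w) = s • cons₂ a b v + t • cons₂ a b w := by
  ext k
  refine Fin.cases ?_ (Fin.cases ?_ fun i => ?_) k
  · simp [← add_mul, hst]
  · simp [← add_mul, hst]
  · simp

def chamber (a b : ℝ) (σ : Equiv.Perm (Fin (n + 2))) : Set (Fin n → ℝ) :=
  {w | StrictMono (cons₂ a b w ∘ σ)}

variable {a b : ℝ} {σ : Equiv.Perm (Fin (n + 2))}

theorem isOpen_chamber : IsOpen (chamber a b σ) := by
  simp only [chamber, Fin.strictMono_iff_lt_succ, Set.ofPred_forall]
  exact isOpen_iInter_of_finite fun k =>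
    isOpen_lt ((continuous_apply _).comp (continuous_cons₂ a b))
      ((continuous_apply _).comp (continuous_cons₂ a b))

theorem convex_chamber : Convex ℝ (chamber a b σ) := by
  intro v hv w hw s t hs ht hst k l hkl
  simp only [comp_apply, cons₂_smul_add_smul a b v w hst, Pi.add_apply, Pi.smul_apply,
    smul_eq_mul]
  have hv' := hv hkl
  have hw' := hw hkl
  simp only [comp_apply] at hv' hw'
  rcases hs.eq_or_lt with rfl | hs
  · simp only [zero_add] at hst
    simpa [hst] using hw'
  · exact add_lt_add_of_lt_of_le (mul_lt_mul_of_pos_left hv' hs)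
      (mul_le_mul_of_nonneg_left hw'.le ht)

theorem comp_mem_chamber_iff {φ : ℝ → ℝ} (hφ : StrictMono φ) {w : Fin n → ℝ} :
    φ ∘ w ∈ chamber (φ a) (φ b) σ ↔ w ∈ chamber a b σ := by
  simp only [chamber, Set.mem_ofPred_eq, ← comp_cons₂, comp_assoc]
  exact ⟨fun h _ _ hkl => hφ.lt_iff_lt.1 (h hkl), hφ.comp⟩

theorem nonempty_chamber_zero_one_iff :
    (chamber 0 1 σ).Nonempty ↔ σ.symm 0 < σ.symm 1 := by
  constructor
  · rintro ⟨w, hw⟩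
    rw [← hw.lt_iff_lt]
    simp
  · intro h
    -- The ranks `k ↦ σ⁻¹ k` form a point of the chamber of `σ`; the increasing affine map
    -- sending `x 0, x 1` to `0, 1` normalises its first two coordinates.
    set x : Fin (n + 2) → ℝ := fun k => (σ.symm k : ℕ)
    have hx : StrictMono (x ∘ σ) := fun k l hkl => by simpa [x] using hkl
    have hx01 : x 0 < x 1 := by simpa [x] using h
    set φ : ℝ → ℝ := fun t => (t - x 0) / (x 1 - x 0)
    have hφ : StrictMono φ := fun s t hst => div_lt_div_of_pos_right (by linarith) (by linarith)
    have h0 : φ (x 0) = 0 := by simp [φ]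
    have h1 : φ (x 1) = 1 := div_self (by linarith)
    refine ⟨φ ∘ fun i => x i.succ.succ, ?_⟩
    rw [← h0, ← h1, comp_mem_chamber_iff hφ, chamber, Set.mem_ofPred_eq, cons₂_self]
    exact hx

end Chamber

section ToricComplement

variable {n : ℕ}

def realToricComplement (n : ℕ) : Set (Fin n → ℝ) :=
  {z | (∀ i, z i ≠ 0) ∧ ∀ i j : Fin n, i ≤ j → ∏ l ∈ Icc i j, z l ≠ 1}

def configSpace (n : ℕ) : Set (Fin n → ℝ) := {w | Injective (cons₂ 0 1 w)}

theorem mem_realToricComplement_iff {z : Fin n → ℝ} :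
    z ∈ realToricComplement n ↔ Injective (Fin.cons 0 (Fin.partialProd z) : Fin (n + 2) → ℝ) := by
  rw [Fin.cons_injective_iff]
  constructor
  · rintro ⟨hz, hprod⟩
    have hp := Fin.partialProd_ne_zero_iff.2 hz
    exact ⟨fun ⟨k, hk⟩ => hp k hk, (Fin.injective_partialProd_iff hp).2 hprod⟩
  · rintro ⟨h0, hinj⟩
    have hp : ∀ k, Fin.partialProd z k ≠ 0 := fun k hk => h0 ⟨k, hk⟩
    exact ⟨Fin.partialProd_ne_zero_iff.1 hp, (Fin.injective_partialProd_iff hp).1 hinj⟩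

theorem cons₂_tail_partialProd (z : Fin n → ℝ) :
    cons₂ 0 1 (Fin.tail (Fin.partialProd z)) = Fin.cons 0 (Fin.partialProd z) := by
  rw [cons₂, ← Fin.partialProd_zero z, Fin.cons_self_tail]

theorem cons_one_ne_zero_of_mem_configSpace {w : Fin n → ℝ} (hw : w ∈ configSpace n)
    (k : Fin (n + 1)) : (Fin.cons 1 w : Fin (n + 1) → ℝ) k ≠ 0 :=
  fun h => (Fin.cons_injective_iff.1 hw).1 ⟨k, h⟩

def consecutiveRatios {G₀ : Type*} [GroupWithZero G₀] (w : Fin n → G₀) : Fin n → G₀ :=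
  fun i => w i / (Fin.cons 1 w : Fin (n + 1) → G₀) i.castSucc

theorem partialProd_consecutiveRatios {G₀ : Type*} [CommGroupWithZero G₀] {w : Fin n → G₀}
    (hw : ∀ k, (Fin.cons 1 w : Fin (n + 1) → G₀) k ≠ 0) :
    Fin.partialProd (consecutiveRatios w) = Fin.cons 1 w := by
  funext k
  induction k using Fin.induction with
  | zero => simp
  | succ i ih =>
    rw [Fin.partialProd_succ, ih, consecutiveRatios, mul_div_cancel₀ _ (hw _), Fin.cons_succ]

theorem consecutiveRatios_tail_partialProd {G₀ : Type*} [CommGroupWithZero G₀] {z : Fin n → G₀}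
    (hz : ∀ i, z i ≠ 0) : consecutiveRatios (Fin.tail (Fin.partialProd z)) = z := by
  funext i
  rw [consecutiveRatios, ← Fin.partialProd_zero z, Fin.cons_self_tail, Fin.tail,
    Fin.partialProd_succ, mul_div_cancel_left₀ _ (Fin.partialProd_ne_zero_iff.2 hz _)]

noncomputable def partialProdHomeomorph (n : ℕ) : realToricComplement n ≃ₜ configSpace n where
  toFun z := ⟨Fin.tail (Fin.partialProd z.1), by
    rw [configSpace, Set.mem_ofPred_eq, cons₂_tail_partialProd]
    exact mem_realToricComplement_iff.1 z.2⟩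
  invFun w := ⟨consecutiveRatios w.1, by
    rw [mem_realToricComplement_iff,
      partialProd_consecutiveRatios (cons_one_ne_zero_of_mem_configSpace w.2)]
    exact w.2⟩
  left_inv z := Subtype.ext (consecutiveRatios_tail_partialProd z.2.1)
  right_inv w := Subtype.ext (by
    simp only [partialProd_consecutiveRatios (cons_one_ne_zero_of_mem_configSpace w.2),
      Fin.tail_cons])
  continuous_toFun := by
    refine Continuous.subtype_mk (continuous_pi fun i => ?_) _
    exact (Fin.continuous_partialProd _).comp continuous_subtype_val
  continuous_invFun := by
    refine Continuous.subtype_mk (continuous_pi fun i => ?_) _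
    have hcons : Continuous fun w : configSpace n => (Fin.cons 1 w.1 : Fin (n + 1) → ℝ) :=
      continuous_const.finCons continuous_subtype_val
    exact ((continuous_apply i).comp continuous_subtype_val).div
      ((continuous_apply _).comp hcons) fun w => cons_one_ne_zero_of_mem_configSpace w.2 _

end ToricComplement

section Chambers

variable {n : ℕ} {σ : Equiv.Perm (Fin (n + 2))}

theorem chamber_subset_configSpace : chamber 0 1 σ ⊆ configSpace n :=
  fun _ hw => hw.injective.of_comp_right σ.surjective

theorem sort_eq_iff_mem_chamber {w : Fin n → ℝ} (hw : w ∈ configSpace n) :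
    Tuple.sort (cons₂ 0 1 w) = σ ↔ w ∈ chamber 0 1 σ :=
  eq_comm.trans (Tuple.eq_sort_iff_strictMono hw)

theorem nonempty_homeomorph_chamber {a b : ℝ} (hne : (chamber a b σ).Nonempty) :
    Nonempty (chamber a b σ ≃ₜ (Fin n → ℝ)) := by
  set e := (orderIsoIooNegOneOne ℝ).toHomeomorph
  set φ : ℝ → ℝ := fun x => e x
  have hφ : StrictMono φ := (Subtype.strictMono_coe _).comp (orderIsoIooNegOneOne ℝ).strictMono
  have hemb : IsEmbedding fun w : Fin n → ℝ => φ ∘ w :=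
    IsEmbedding.piMap fun _ => IsEmbedding.subtypeVal.comp e.isEmbedding
  have himage : (fun w : Fin n → ℝ => φ ∘ w) '' chamber a b σ =
      chamber (φ a) (φ b) σ ∩ Set.univ.pi fun _ => Set.Ioo (-1) 1 := by
    ext v
    constructor
    · rintro ⟨w, hw, rfl⟩
      exact ⟨(comp_mem_chamber_iff hφ).2 hw, fun i _ => (e (w i)).2⟩
    · rintro ⟨hv, hbox⟩
      refine ⟨fun i => e.symm ⟨v i, hbox i trivial⟩, ?_, funext fun i => by simp [φ]⟩
      rw [← comp_mem_chamber_iff hφ]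
      convert hv
      funext i
      simp [φ]
  obtain ⟨g⟩ := (convex_chamber.inter (convex_pi fun _ _ => convex_Ioo _ _))
    |>.nonempty_homeomorph_of_isOpen_of_isBounded
    (isOpen_chamber.inter (isOpen_set_pi Set.finite_univ fun _ _ => isOpen_Ioo))
    ((Bornology.IsBounded.pi fun _ => Metric.isBounded_Ioo _ _).subset Set.inter_subset_right)
    (himage ▸ hne.image _)
  exact ⟨(hemb.homeomorphImage _).trans ((Homeomorph.setCongr himage).trans g)⟩

end Chambers

section Components

variable {n : ℕ}

theorem isEmbedding_partialProdHomeomorph :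
    IsEmbedding (Subtype.val ∘ partialProdHomeomorph n) :=
  IsEmbedding.subtypeVal.comp (partialProdHomeomorph n).isEmbedding

theorem chamber_subset_range_partialProdHomeomorph (σ : Equiv.Perm (Fin (n + 2))) :
    chamber 0 1 σ ⊆ Set.range (Subtype.val ∘ partialProdHomeomorph n) := by
  rw [Set.range_comp, (partialProdHomeomorph n).range_coe, Set.image_univ, Subtype.range_coe]
  exact chamber_subset_configSpace

noncomputable def chamberIndex (z : realToricComplement n) : Equiv.Perm (Fin (n + 2)) :=
  Tuple.sort (cons₂ 0 1 (partialProdHomeomorph n z))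

theorem chamberIndex_preimage_singleton (σ : Equiv.Perm (Fin (n + 2))) :
    chamberIndex ⁻¹' {σ} = (Subtype.val ∘ partialProdHomeomorph n) ⁻¹' chamber 0 1 σ :=
  Set.ext fun z => sort_eq_iff_mem_chamber (partialProdHomeomorph n z).2

theorem isLocallyConstant_chamberIndex : IsLocallyConstant (chamberIndex (n := n)) :=
  IsLocallyConstant.iff_isOpen_fiber.2 fun σ => chamberIndex_preimage_singleton σ ▸
    isOpen_chamber.preimage isEmbedding_partialProdHomeomorph.continuous

theorem isPreconnected_chamberIndex_preimage_singleton (σ : Equiv.Perm (Fin (n + 2))) :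
    IsPreconnected (chamberIndex ⁻¹' {σ}) := by
  rw [chamberIndex_preimage_singleton,
    ← isEmbedding_partialProdHomeomorph.isInducing.isPreconnected_image,
    Set.image_preimage_eq_of_subset (chamber_subset_range_partialProdHomeomorph σ)]
  exact convex_chamber.isPreconnected

theorem range_chamberIndex :
    Set.range (chamberIndex (n := n)) = {σ | σ.symm 0 < σ.symm 1} := by
  ext σ
  rw [Set.mem_ofPred_eq, ← nonempty_chamber_zero_one_iff, ← Set.preimage_singleton_nonempty,
    chamberIndex_preimage_singleton]
  exact ⟨Set.nonempty_of_nonempty_preimage,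
    fun h => h.preimage' (chamber_subset_range_partialProdHomeomorph σ)⟩

theorem connectedComponent_eq_preimage_chamber (z : realToricComplement n) :
    connectedComponent z =
      (Subtype.val ∘ partialProdHomeomorph n) ⁻¹' chamber 0 1 (chamberIndex z) := by
  rw [isLocallyConstant_chamberIndex.connectedComponent_eq_preimage
    isPreconnected_chamberIndex_preimage_singleton, chamberIndex_preimage_singleton]

end Components

theorem stmt_10_general (n : ℕ)
    (R : Set (Fin n → ℝ))
    (hR : R = {z : Fin n → ℝ |
      (∀ i, z i ≠ 0) ∧
      (∀ i j : Fin n, i ≤ j → ∏ l ∈ Finset.Icc i j, z l ≠ 1)}) :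
    Nat.card (ConnectedComponents R) = Nat.factorial (n + 2) / 2 ∧
    ∀ x : R, Nonempty ((connectedComponent x) ≃ₜ (Fin n → ℝ)) := by
  subst hR
  change Nat.card (ConnectedComponents (realToricComplement n)) = _ ∧
    ∀ z : realToricComplement n, Nonempty (connectedComponent z ≃ₜ _)
  constructor
  · have hcount := Equiv.Perm.two_mul_card_symm_lt (zero_ne_one : (0 : Fin (n + 2)) ≠ 1)
    rw [Fintype.card_fin] at hcount
    rw [Nat.card_congr (isLocallyConstant_chamberIndex.connectedComponentsEquivRange
      isPreconnected_chamberIndex_preimage_singleton), range_chamberIndex, ← hcount, Nat.mul_div_cancel_left _ two_pos]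
    rfl
  · intro z
    rw [connectedComponent_eq_preimage_chamber]
    obtain ⟨e⟩ := nonempty_homeomorph_chamber ⟨_, (connectedComponent_eq_preimage_chamber z ▸
      mem_connectedComponent : z ∈ _)⟩
    exact ⟨(isEmbedding_partialProdHomeomorph.homeomorphOfSubsetRange
      (chamber_subset_range_partialProdHomeomorph _)).trans e⟩

/-- The fixed-point set `T_{Aₙ}^{\bar{id}}` of complex conjugation on the complement
`T_{Aₙ}`, in the coordinates `zᵢ = χ(βᵢ)` (all `zᵢ` real and nonzero, with all consecutive
products `∏_{l=i}^{j} z_l ≠ 1`), has exactly `(n+2)!/2` connected components, each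
homeomorphic to `ℝⁿ`; in particular its Euler characteristic is `(n+2)!/2`. -/
theorem stmt_10 (n : ℕ) (hn : 1 ≤ n)
    (R : Set (Fin n → ℝ))
    (hR : R = {z : Fin n → ℝ |
      (∀ i, z i ≠ 0) ∧
      (∀ i j : Fin n, i ≤ j → ∏ l ∈ Finset.Icc i j, z l ≠ 1)}) :
    Nat.card (ConnectedComponents R) = Nat.factorial (n + 2) / 2 ∧
    ∀ x : R, Nonempty ((connectedComponent x) ≃ₜ (Fin n → ℝ)) :=
  stmt_10_general n R hR
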